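/- Let G act cocompactly by covering (deck) transformations on a connected locally finite simplicial complex X̃. Then the number of topological ends of X̃ depends only on G, not on the complex X̃ or the action. -/

import Mathlib

/-!
Since both actions are free, there are `G`-equivariant maps `f : V₁ → V₂` and
`g : V₂ → V₁`. By cocompactness a `G`-invariant function takes only finitely many values, so
`f` and `g` move adjacent vertices a bounded distance apart and `g ∘ f`, `f ∘ g` stay within
bounded distance of the identity; by freeness their fibres are finite. Such a coarse
equivalence of locally finite graphs induces a bijection of ends: an end `e` of `Γ₁` goes to
the end choosing, for finite `L`, the component of `Γ₂ - L` that contains `f v` for any `v`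
in the component chosen by `e` outside the preimage of the `C`-neighbourhood of `L`.
-/

open CategoryTheory Opposite Filter

namespace MulAction

variable {G V W : Type*} [Group G] [MulAction G V] [MulAction G W]

lemma exists_smul_out_eq (v : V) : ∃ g : G, g • (⟦v⟧ : orbitRel.Quotient G V).out = v := by
  obtain ⟨g, hg⟩ := (Quotient.mk_out (s := orbitRel G V) v : _)
  exact ⟨g⁻¹, by simp [← hg]⟩

lemma nonempty_mulActionHom [IsCancelSMul G V] [Nonempty W] : Nonempty (V →[G] W) := by
  choose σ hσ using exists_smul_out_eq (G := G) (V := V)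
  have hσ_smul (g : G) (v : V) : σ (g • v) = g * σ v := by
    have hq : (⟦g • v⟧ : orbitRel.Quotient G V) = ⟦v⟧ := Quotient.sound ⟨g, rfl⟩
    refine IsCancelSMul.right_cancel _ _ (⟦v⟧ : orbitRel.Quotient G V).out ?_
    rw [mul_smul, hσ, ← hq, hσ]
  obtain ⟨b⟩ := ‹Nonempty W›
  exact ⟨⟨fun v => σ v • b, fun g v => by simp [hσ_smul, mul_smul]⟩⟩

variable [Finite (orbitRel.Quotient G V)]

lemma tendstoCofinite_mulActionHom [IsCancelSMul G W] (f : V →[G] W) : TendstoCofinite f := by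
  refine (tendstoCofinite_iff_finite_preimage_singleton _).mpr fun y => ?_
  have hsub (x : W) : {g : G | g • x = y}.Subsingleton := fun g hg h hh =>
    IsCancelSMul.right_cancel g h x (hg.trans hh.symm)
  refine (Set.finite_iUnion fun q : orbitRel.Quotient G V =>
    (hsub (f q.out)).finite.image (· • q.out)).subset fun v hv => ?_
  obtain ⟨g, hg⟩ := exists_smul_out_eq (G := G) v
  refine Set.mem_iUnion.2 ⟨⟦v⟧, g, ?_, hg⟩
  change g • f _ = y
  rwa [← map_smul, hg]

lemma exists_forall_le_of_smul_invariant (φ : V → ℕ)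
    (hφ : ∀ (g : G) v, φ (g • v) = φ v) : ∃ C, ∀ v, φ v ≤ C := by
  obtain ⟨C, hC⟩ := (Set.finite_range fun q : orbitRel.Quotient G V => φ q.out).bddAbove
  refine ⟨C, fun v => ?_⟩
  obtain ⟨g, hg⟩ := exists_smul_out_eq (G := G) v
  exact hC ⟨⟦v⟧, (hφ g _).symm.trans (congrArg φ hg)⟩

end MulAction

namespace SimpleGraph

variable {V W : Type*}

lemma reachable_of_edist_le {G : SimpleGraph V} {u v : V} {n : ℕ} (h : G.edist u v ≤ n) :
    G.Reachable u v :=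
  reachable_of_edist_ne_top (ne_top_of_le_ne_top (ENat.natCast_ne_top n) h)

lemma finite_setOf_edist_le (G : SimpleGraph V) [G.LocallyFinite] (n : ℕ) (x : V) :
    {y | G.edist x y ≤ n}.Finite := by
  induction n generalizing x with
  | zero =>
    convert Set.finite_singleton x using 1
    ext y
    simp [eq_comm (a := y)]
  | succ n ih =>
    refine ((Set.finite_singleton x).union
      ((G.neighborSet x).toFinite.biUnion fun u _ => ih u)).subset fun y hy => ?_
    obtain ⟨p, hp⟩ := (reachable_of_edist_le hy).exists_walk_length_eq_edist
    cases p with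
    | nil => exact Or.inl rfl
    | cons hadj q =>
      refine Or.inr (Set.mem_biUnion hadj ((edist_le q).trans ?_))
      have hq : (q.length + 1 : ℕ∞) ≤ n + 1 := by
        simpa [← hp] using hy
      exact_mod_cast (ENat.add_le_add_iff_right ENat.one_ne_top).mp hq

lemma componentComplMk_eq_of_walk {G : SimpleGraph V} {K : Set V} {u v : V} (p : G.Walk u v)
    (hp : ∀ x ∈ p.support, x ∉ K) (hu : u ∉ K) (hv : v ∉ K) :
    G.componentComplMk hu = G.componentComplMk hv :=
  ConnectedComponent.eq.mpr ⟨p.induce Kᶜ hp⟩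

lemma componentComplMk_eq_of_edist_le {G : SimpleGraph V} {K : Set V} {x y : V} {r : ℕ}
    (hK : ∀ u, G.edist x u ≤ r → u ∉ K) (hxy : G.edist x y ≤ r) (hx : x ∉ K)
    (hy : y ∉ K) : G.componentComplMk hx = G.componentComplMk hy := by
  classical
  obtain ⟨p, hp⟩ := (reachable_of_edist_le hxy).exists_walk_length_eq_edist
  refine componentComplMk_eq_of_walk p (fun u hu => hK u ?_) hx hy
  calc G.edist x u ≤ (p.takeUntil u hu).length := edist_le _
    _ ≤ p.length := by exact_mod_cast p.length_takeUntil_le_length hu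
    _ ≤ r := hp ▸ hxy

section CoarseMap

variable {Γ : SimpleGraph V} {Δ : SimpleGraph W} {f : V → W} {C : ℕ} {L : Finset W} {v : V}

variable (Δ f C) in
noncomputable def coarsePreimage [Δ.LocallyFinite] [TendstoCofinite f] (L : Finset W) : Finset V :=
  (TendstoCofinite.finite_preimage f
    (L.finite_toSet.biUnion fun x _ => Δ.finite_setOf_edist_le C x)).toFinset

variable [Δ.LocallyFinite] [TendstoCofinite f]

lemma mem_coarsePreimage :
    v ∈ coarsePreimage Δ f C L ↔ ∃ x ∈ L, Δ.edist x (f v) ≤ C := by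
  simp [coarsePreimage]

lemma coarsePreimage_mono {L' : Finset W} (h : L' ⊆ L) :
    coarsePreimage Δ f C L' ⊆ coarsePreimage Δ f C L := by
  intro v
  simp only [mem_coarsePreimage]
  exact fun ⟨x, hx, hxv⟩ => ⟨x, h hx, hxv⟩

lemma notMem_of_edist_le_of_notMem_coarsePreimage (hv : v ∉ (coarsePreimage Δ f C L : Set V))
    {w : W} (hw : Δ.edist (f v) w ≤ C) : w ∉ (L : Set W) :=
  fun hwL => hv (mem_coarsePreimage.mpr ⟨w, hwL, edist_comm.trans_le hw⟩)

lemma apply_notMem_of_notMem_coarsePreimage (hv : v ∉ (coarsePreimage Δ f C L : Set V)) :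
    f v ∉ (L : Set W) :=
  notMem_of_edist_le_of_notMem_coarsePreimage hv (by simp)

variable (hf : ∀ ⦃v w⦄, Γ.Adj v w → Δ.edist (f v) (f w) ≤ C)

noncomputable def componentComplMap (L : Finset W) :
    Γ.ComponentCompl (coarsePreimage Δ f C L) → Δ.ComponentCompl L :=
  ComponentCompl.lift (fun _ hv => Δ.componentComplMk (apply_notMem_of_notMem_coarsePreimage hv))
    fun _ _ hv _ hvw => componentComplMk_eq_of_edist_le
      (fun _ => notMem_of_edist_le_of_notMem_coarsePreimage hv) (hf hvw) _ _

lemma componentComplMap_mk (hv : v ∉ (coarsePreimage Δ f C L : Set V)) :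
    componentComplMap hf L (Γ.componentComplMk hv) =
      Δ.componentComplMk (apply_notMem_of_notMem_coarsePreimage hv) :=
  rfl

noncomputable def endMap (e : Γ.end) : Δ.end :=
  ⟨fun L => componentComplMap hf L.unop (e.val (op (coarsePreimage Δ f C L.unop))),
    fun {L L'} h => by
      obtain ⟨v, hv, he⟩ := (e.val (op (coarsePreimage Δ f C L.unop))).exists_eq_mk
      have he' := Γ.end_hom_mk_of_mk e.prop (K := op (coarsePreimage Δ f C L'.unop))
        (opHomOfLE (coarsePreimage_mono (le_of_op_hom h))) hv he.symm
      change ComponentCompl.hom (Finset.coe_subset.mpr (le_of_op_hom h))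
        (componentComplMap hf L.unop _) = componentComplMap hf L'.unop _
      rw [← he, he', componentComplMap_mk, componentComplMap_mk, ComponentCompl.hom_mk]⟩

lemma endMap_apply_of_eq_mk {e : Γ.end} (hv : v ∉ (coarsePreimage Δ f C L : Set V))
    (he : e.val (op (coarsePreimage Δ f C L)) = Γ.componentComplMk hv) :
    (endMap hf e).val (op L) = Δ.componentComplMk (apply_notMem_of_notMem_coarsePreimage hv) :=
  congrArg (componentComplMap hf L) he

variable [Γ.LocallyFinite] {g : W → V} [TendstoCofinite g] {C' : ℕ}
  (hg : ∀ ⦃v w⦄, Δ.Adj v w → Γ.edist (g v) (g w) ≤ C')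

lemma endMap_endMap_of_edist_le {D : ℕ} (hgf : ∀ v, Γ.edist v (g (f v)) ≤ D) (e : Γ.end) :
    endMap hg (endMap hf e) = e := by
  classical
  refine Subtype.ext (funext fun K => ?_)
  set K₁ := coarsePreimage Δ f C (coarsePreimage Γ g C' K.unop)
  -- the `D`-ball around a vertex outside `B` misses `K`
  set B := coarsePreimage Γ id D K.unop
  have hKB : K.unop ⊆ B := fun x hx => mem_coarsePreimage.mpr ⟨x, hx, by simp⟩
  obtain ⟨v, hv, he⟩ := (e.val (op (K₁ ∪ B))).exists_eq_mk
  have hvB : v ∉ (B : Set V) := fun h => hv (Finset.mem_union_right _ h)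
  have he₁ := Γ.end_hom_mk_of_mk e.prop (K := op K₁)
    (opHomOfLE Finset.subset_union_left) hv he.symm
  have he₂ := Γ.end_hom_mk_of_mk e.prop (K := K)
    (opHomOfLE (hKB.trans Finset.subset_union_right)) hv he.symm
  have hfe := endMap_apply_of_eq_mk hf _ he₁
  change (endMap hg (endMap hf e)).val (op K.unop) = _
  rw [endMap_apply_of_eq_mk hg _ hfe, he₂]
  exact (componentComplMk_eq_of_edist_le
    (fun _ => notMem_of_edist_le_of_notMem_coarsePreimage hvB) (hgf v) _ _).symm

noncomputable def endEquivOfCoarseInverse {D D' : ℕ} (hgf : ∀ v, Γ.edist v (g (f v)) ≤ D)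
    (hfg : ∀ w, Δ.edist w (f (g w)) ≤ D') : Γ.end ≃ Δ.end where
  toFun := endMap hf
  invFun := endMap hg
  left_inv := endMap_endMap_of_edist_le hf hg hgf
  right_inv := endMap_endMap_of_edist_le hg hf hfg

end CoarseMap

section Action

open MulAction

variable {G : Type*} [Group G] [MulAction G V] [MulAction G W]
  {Γ : SimpleGraph V} {Δ : SimpleGraph W}
  (haut : ∀ (g : G) (x y : V), Γ.Adj x y → Γ.Adj (g • x) (g • y))

include haut in
lemma edist_smul_smul (g : G) (x y : V) : Γ.edist (g • x) (g • y) = Γ.edist x y := by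
  have hle (g : G) (x y : V) : Γ.edist (g • x) (g • y) ≤ Γ.edist x y :=
    le_iInf fun p => (edist_le (p.map ⟨(g • ·), haut g _ _⟩)).trans_eq (by simp)
  refine le_antisymm (hle g x y) ?_
  simpa using hle g⁻¹ (g • x) (g • y)

variable [Finite (orbitRel.Quotient G V)]

include haut in
lemma exists_forall_adj_le_of_smul_invariant [Γ.LocallyFinite] (φ : V → V → ℕ)
    (hφ : ∀ (g : G) v w, φ (g • v) (g • w) = φ v w) :
    ∃ C, ∀ v w, Γ.Adj v w → φ v w ≤ C := by
  obtain ⟨C, hC⟩ := (Set.finite_iUnion fun q : orbitRel.Quotient G V =>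
    (Γ.neighborSet q.out).toFinite.image (φ q.out)).bddAbove
  refine ⟨C, fun v w hvw => ?_⟩
  obtain ⟨g, hg⟩ := exists_smul_out_eq (G := G) v
  have hadj : Γ.Adj (⟦v⟧ : orbitRel.Quotient G V).out (g⁻¹ • w) := by
    have := haut g⁻¹ _ _ hvw
    rwa [← hg, inv_smul_smul] at this
  calc φ v w = φ (g • (⟦v⟧ : orbitRel.Quotient G V).out) (g • g⁻¹ • w) := by
        rw [hg, smul_inv_smul]
    _ = φ (⟦v⟧ : orbitRel.Quotient G V).out (g⁻¹ • w) := hφ _ _ _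
    _ ≤ C := hC (Set.mem_iUnion.2 ⟨⟦v⟧, Set.mem_image_of_mem _ hadj⟩)

include haut in
lemma exists_edist_le_of_adj [Γ.LocallyFinite]
    (haut' : ∀ (g : G) (x y : W), Δ.Adj x y → Δ.Adj (g • x) (g • y)) (hΔ : Δ.Connected)
    (f : V →[G] W) : ∃ C : ℕ, ∀ ⦃v w⦄, Γ.Adj v w → Δ.edist (f v) (f w) ≤ C := by
  obtain ⟨C, hC⟩ := exists_forall_adj_le_of_smul_invariant haut
    (fun v w => Δ.dist (f v) (f w)) fun g v w => by
      simp only [map_smul, dist, edist_smul_smul haut']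
  refine ⟨C, fun v w hvw => ?_⟩
  rw [← (hΔ.preconnected _ _).coe_dist_eq_edist]
  exact_mod_cast hC v w hvw

include haut in
lemma exists_edist_apply_le (hΓ : Γ.Connected) (f : V →[G] V) :
    ∃ D : ℕ, ∀ v, Γ.edist v (f v) ≤ D := by
  obtain ⟨D, hD⟩ := exists_forall_le_of_smul_invariant (G := G) (fun v => Γ.dist v (f v))
    fun g v => by simp only [map_smul, dist, edist_smul_smul haut]
  refine ⟨D, fun v => ?_⟩
  rw [← (hΓ.preconnected _ _).coe_dist_eq_edist]
  exact_mod_cast hD v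

end Action

end SimpleGraph

open SimpleGraph MulAction in
/-- If a group `G` acts cocompactly by covering (deck) transformations — i.e.
freely, by automorphisms, with finitely many orbits — on two connected locally
finite graphs (the `1`-skeleta of simplicial complexes), then the two graphs have
the same number of topological ends: the number of ends depends only on `G`. -/
theorem stmt_15 (G : Type*) [Group G]
    (V₁ V₂ : Type*) (Γ₁ : SimpleGraph V₁) (Γ₂ : SimpleGraph V₂)
    [MulAction G V₁] [MulAction G V₂]
    (hconn₁ : Γ₁.Connected) (hconn₂ : Γ₂.Connected)
    (hlf₁ : Γ₁.LocallyFinite) (hlf₂ : Γ₂.LocallyFinite)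
    (haut₁ : ∀ (g : G) (x y : V₁), Γ₁.Adj x y → Γ₁.Adj (g • x) (g • y))
    (haut₂ : ∀ (g : G) (x y : V₂), Γ₂.Adj x y → Γ₂.Adj (g • x) (g • y))
    (hfree₁ : ∀ (g : G) (x : V₁), g • x = x → g = 1)
    (hfree₂ : ∀ (g : G) (x : V₂), g • x = x → g = 1)
    (hcocompact₁ : Finite (MulAction.orbitRel.Quotient G V₁))
    (hcocompact₂ : Finite (MulAction.orbitRel.Quotient G V₂)) :
    Nat.card Γ₁.end = Nat.card Γ₂.end := by
  have := isCancelSMul_iff_eq_one_of_smul_eq.mpr hfree₁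
  have := isCancelSMul_iff_eq_one_of_smul_eq.mpr hfree₂
  have := hconn₁.nonempty
  have := hconn₂.nonempty
  obtain ⟨f⟩ := nonempty_mulActionHom (G := G) (V := V₁) (W := V₂)
  obtain ⟨g⟩ := nonempty_mulActionHom (G := G) (V := V₂) (W := V₁)
  have := tendstoCofinite_mulActionHom f
  have := tendstoCofinite_mulActionHom g
  obtain ⟨C, hf⟩ := exists_edist_le_of_adj haut₁ haut₂ hconn₂ f
  obtain ⟨C', hg⟩ := exists_edist_le_of_adj haut₂ haut₁ hconn₁ g
  obtain ⟨D, hgf⟩ := exists_edist_apply_le haut₁ hconn₁ (g.comp f)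
  obtain ⟨D', hfg⟩ := exists_edist_apply_le haut₂ hconn₂ (f.comp g)
  exact Nat.card_congr (endEquivOfCoarseInverse hf hg hgf hfg)
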